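/- arXiv:math/0210480 — 5 statements merged into one kernel-verified Lean document; each statement's English description precedes it below -/
import Mathlib

section
/- Let $M$ be a $3\times 3$ matrix with rational entries, let $\lambda$ be a real number, and let $\alpha, \beta$ be real numbers such that $M \cdot (1, \alpha, \beta)^T = \lambda (1, \alpha, \beta)^T$ (viewing $M$ as a real matrix). Suppose moreover that the real eigenspace $\ker(M - \lambda I) \subseteq \mathbb{R}^3$ is one-dimensional. Then the $\mathbb{Q}$-subalgebra $\mathbb{Q}[\alpha, \beta]$ of $\mathbb{R}$ has dimension at most $3$ as a $\mathbb{Q}$-vector space; in particular $\alpha$ and $\beta$ are algebraic numbers of degree at most $3$. -/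
/-!
The eigenvalue `lam` is a root of the characteristic polynomial of `M`, so `K = ℚ(lam)` has degree
at most `3` over `ℚ`. The matrix `M - lam` is defined over `K` and singular, so it has a nonzero
kernel vector with coordinates in `K`; as the real kernel is a line, that vector is a multiple of
`(1, α, β)`, which puts `α` and `β` in `K`.
-/

open Polynomial Module

namespace Matrix

variable {K L : Type*} [Field K] [Field L] [Algebra K L] {n : Type*} [Fintype n] [DecidableEq n]

theorem aeval_charpoly_eq_zero_of_mulVec_eq_smul (M : Matrix n n K) {μ : L} {w : n → L}
    (hw : w ≠ 0) (h : M.map (algebraMap K L) *ᵥ w = μ • w) : aeval μ M.charpoly = 0 := by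
  rw [aeval_def, ← eval_map, ← charpoly_map, eval_charpoly]
  refine exists_mulVec_eq_zero_iff.mp ⟨w, hw, ?_⟩
  rw [sub_mulVec, h, scalar_apply, diagonal_const_mulVec, sub_self]

theorem mem_range_algebraMap_of_finrank_ker_eq_one (A : Matrix n n K) {w : n → L}
    (hw : A.map (algebraMap K L) *ᵥ w = 0)
    (hker : finrank L (LinearMap.ker (A.map (algebraMap K L)).mulVecLin) = 1)
    {i₀ : n} (hi₀ : w i₀ = 1) (i : n) : w i ∈ Set.range (algebraMap K L) := by
  have hw₀ : w ≠ 0 := fun h => by simp [h] at hi₀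
  obtain ⟨v, hv₀, hv⟩ : ∃ v ≠ 0, A *ᵥ v = 0 := by
    refine exists_mulVec_eq_zero_iff.mpr ((algebraMap K L).injective ?_)
    rw [RingHom.map_det, map_zero]
    exact exists_mulVec_eq_zero_iff.mp ⟨w, hw₀, hw⟩
  have hv_ker : algebraMap K L ∘ v ∈ LinearMap.ker (A.map (algebraMap K L)).mulVecLin := by
    ext i
    simp [← RingHom.map_mulVec, hv]
  obtain ⟨c, hc⟩ := (finrank_eq_one_iff_of_nonzero' (⟨w, by simpa using hw⟩ :
    LinearMap.ker (A.map (algebraMap K L)).mulVecLin) (by simpa using hw₀)).mp hker ⟨_, hv_ker⟩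
  have hvw : ∀ j, algebraMap K L (v j) = c * w j := fun j => by
    simpa using congrFun (congrArg Subtype.val hc).symm j
  have hc₀ : c ≠ 0 := by
    rintro rfl
    exact hv₀ (funext fun j => by simpa using hvw j)
  refine ⟨v i / v i₀, ?_⟩
  rw [map_div₀, hvw, hvw, hi₀, mul_one, mul_div_cancel_left₀ _ hc₀]

theorem eigenvector_apply_mem_of_finrank_ker_eq_one (F : IntermediateField K L)
    (M : Matrix n n K) {μ : L} (hμ : μ ∈ F) {w : n → L}
    (hw : M.map (algebraMap K L) *ᵥ w = μ • w)
    (hker : finrank L (LinearMap.ker (M.map (algebraMap K L) - μ • 1).mulVecLin) = 1)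
    {i₀ : n} (hi₀ : w i₀ = 1) (i : n) : w i ∈ F := by
  set A : Matrix n n F := M.map (algebraMap K F) - (⟨μ, hμ⟩ : F) • 1
  have hA : A.map (algebraMap F L) = M.map (algebraMap K L) - μ • 1 := by
    ext j k
    by_cases h : j = k <;> simp [A, h]
  obtain ⟨x, hx⟩ := A.mem_range_algebraMap_of_finrank_ker_eq_one
    (by rw [hA, sub_mulVec, hw, smul_mulVec, one_mulVec, sub_self]) (hA ▸ hker) hi₀ i
  exact hx ▸ x.2

end Matrix

namespace IntermediateField

variable {K L : Type*} [Field K] [Field L] [Algebra K L]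

theorem finrank_adjoin_le_natDegree {p : K[X]} (hp : p.Monic) {x : L} (hx : aeval x p = 0) :
    finrank K K⟮x⟯ ≤ p.natDegree := by
  rw [adjoin.finrank ⟨p, hp, hx⟩]
  exact natDegree_le_of_dvd (minpoly.dvd K x hx) hp.ne_zero

variable (F : IntermediateField K L) [FiniteDimensional K F]

theorem natDegree_minpoly_le_finrank {x : L} (hx : x ∈ F) :
    (minpoly K x).natDegree ≤ finrank K F := by
  simpa [minpoly_eq] using minpoly.natDegree_le (A := K) (⟨x, hx⟩ : F)

theorem isAlgebraic_of_mem {x : L} (hx : x ∈ F) : IsAlgebraic K x :=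
  isAlgebraic_iff.mp (Algebra.IsAlgebraic.isAlgebraic (⟨x, hx⟩ : F))

theorem rank_algebraAdjoin_le_finrank {s : Set L} (hs : s ⊆ F) :
    Module.rank K (Algebra.adjoin K s) ≤ finrank K F := by
  rw [finrank_eq_rank]
  exact Submodule.rank_mono (Subalgebra.toSubmodule.monotone (Algebra.adjoin_le hs))

end IntermediateField

open IntermediateField in
theorem eigenvector_coords_cubic (M : Matrix (Fin 3) (Fin 3) ℚ) (lam α β : ℝ)
    (heig : (M.map ((↑) : ℚ → ℝ)).mulVec ![1, α, β] = lam • ![1, α, β])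
    (hdim : Module.finrank ℝ
      (LinearMap.ker (Matrix.mulVecLin
        (M.map ((↑) : ℚ → ℝ) - lam • (1 : Matrix (Fin 3) (Fin 3) ℝ)))) = 1) :
    Module.rank ℚ (Algebra.adjoin ℚ ({α, β} : Set ℝ)) ≤ 3 ∧
    IsAlgebraic ℚ α ∧ (minpoly ℚ α).natDegree ≤ 3 ∧
    IsAlgebraic ℚ β ∧ (minpoly ℚ β).natDegree ≤ 3 := by
  change (M.map (algebraMap ℚ ℝ)).mulVec _ = _ at heig
  change finrank ℝ (LinearMap.ker (M.map (algebraMap ℚ ℝ) - _).mulVecLin) = 1 at hdim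
  have hlam : aeval lam M.charpoly = 0 :=
    M.aeval_charpoly_eq_zero_of_mulVec_eq_smul (fun h => by simpa using congrFun h 0) heig
  have hint : IsIntegral ℚ lam := ⟨M.charpoly, M.charpoly_monic, hlam⟩
  set K := ℚ⟮lam⟯
  have : FiniteDimensional ℚ K := adjoin.finiteDimensional hint
  have hK : finrank ℚ K ≤ 3 := by
    simpa using finrank_adjoin_le_natDegree M.charpoly_monic hlam
  have hcoord := M.eigenvector_apply_mem_of_finrank_ker_eq_one K
    (mem_adjoin_simple_self ℚ lam) heig hdim (i₀ := 0) rfl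
  have hα : α ∈ K := hcoord 1
  have hβ : β ∈ K := hcoord 2
  refine ⟨?_, K.isAlgebraic_of_mem hα, (K.natDegree_minpoly_le_finrank hα).trans hK,
    K.isAlgebraic_of_mem hβ, (K.natDegree_minpoly_le_finrank hβ).trans hK⟩
  calc Module.rank ℚ (Algebra.adjoin ℚ ({α, β} : Set ℝ)) ≤ finrank ℚ K :=
        K.rank_algebraAdjoin_le_finrank (Set.insert_subset hα (Set.singleton_subset_iff.mpr hβ))
    _ ≤ 3 := by exact_mod_cast hK
end

section
/- Let $A$ and $B$ be $3\times 3$ matrices with rational entries, with $B$ invertible, let $\lambda$ be a real number, and let $\alpha, \beta$ be real numbers. Set $w = B^{-1}(1, \alpha, \beta)^T \in \mathbb{R}^3$, and suppose $A w = \lambda w$ with $w \neq 0$, and that the real eigenspace $\ker(A - \lambda I) \subseteq \mathbb{R}^3$ is one-dimensional. Then the $\mathbb{Q}$-subalgebra $\mathbb{Q}[\alpha, \beta]$ of $\mathbb{R}$ has dimension at most $3$ as a $\mathbb{Q}$-vector space; in particular $\alpha$ and $\beta$ are algebraic of degree at most $3$. -/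
open Matrix Polynomial

lemma eval_charpoly' (M : Matrix (Fin 3) (Fin 3) ℝ) (t : ℝ) :
    M.charpoly.eval t = (t • (1 : Matrix (Fin 3) (Fin 3) ℝ) - M).det := by
  rw [Matrix.charpoly, ← Polynomial.coe_evalRingHom, RingHom.map_det]
  congr 1
  ext i j
  by_cases h : i = j <;>
    simp [h, Matrix.charmatrix_apply, Matrix.one_apply, Matrix.smul_apply, Matrix.diagonal_apply]

theorem periodic_farey_gives_cubic (A B : Matrix (Fin 3) (Fin 3) ℚ)
    (hB : IsUnit B) (lam α β : ℝ)
    (w : Fin 3 → ℝ)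
    (hw : w = ((B⁻¹).map ((↑) : ℚ → ℝ)).mulVec ![1, α, β])
    (heig : (A.map ((↑) : ℚ → ℝ)).mulVec w = lam • w)
    (hw0 : w ≠ 0)
    (hdim : Module.finrank ℝ
      (LinearMap.ker (Matrix.mulVecLin
        (A.map ((↑) : ℚ → ℝ) - lam • (1 : Matrix (Fin 3) (Fin 3) ℝ)))) = 1) :
    Module.rank ℚ (Algebra.adjoin ℚ ({α, β} : Set ℝ)) ≤ 3 ∧
    IsAlgebraic ℚ α ∧ (minpoly ℚ α).natDegree ≤ 3 ∧
    IsAlgebraic ℚ β ∧ (minpoly ℚ β).natDegree ≤ 3 := by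
  set M : Matrix (Fin 3) (Fin 3) ℝ :=
    A.map ((↑) : ℚ → ℝ) - lam • (1 : Matrix (Fin 3) (Fin 3) ℝ) with hM
  -- w is in the kernel of M
  have hMw : M.mulVec w = 0 := by
    rw [hM, Matrix.sub_mulVec, heig, Matrix.smul_mulVec, Matrix.one_mulVec, sub_self]
  -- det M = 0
  have hdet : M.det = 0 := Matrix.exists_mulVec_eq_zero_iff.mp ⟨w, hw0, hMw⟩
  -- lam is a root of the charpoly of A
  have hroot : Polynomial.aeval lam A.charpoly = 0 := by
    have : (A.map ((↑) : ℚ → ℝ)).charpoly.eval lam = 0 := by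
      rw [eval_charpoly']
      have : lam • (1 : Matrix (Fin 3) (Fin 3) ℝ) - A.map ((↑) : ℚ → ℝ) = -M := by
        rw [hM]; abel
      rw [this, Matrix.det_neg, hdet]
      simp
    have hcast : (A.map ((↑) : ℚ → ℝ)) = A.map (algebraMap ℚ ℝ) := by
      congr 1
    rw [hcast, Matrix.charpoly_map A (algebraMap ℚ ℝ), Polynomial.eval_map] at this
    rw [Polynomial.aeval_def]
    exact this
  have hmonic : A.charpoly.Monic := A.charpoly_monic
  have hint : IsIntegral ℚ lam := ⟨A.charpoly, hmonic, hroot⟩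
  -- minpoly of lam has degree ≤ 3
  have hminlam : (minpoly ℚ lam).natDegree ≤ 3 := by
    have hd : A.charpoly.natDegree = 3 := by
      simpa using A.charpoly_natDegree_eq_dim
    calc (minpoly ℚ lam).natDegree ≤ A.charpoly.natDegree :=
          Polynomial.natDegree_le_of_dvd (minpoly.dvd ℚ lam hroot) hmonic.ne_zero
      _ = 3 := hd
  -- the field K = ℚ(lam)
  set K : IntermediateField ℚ ℝ := IntermediateField.adjoin ℚ {lam} with hK
  haveI : FiniteDimensional ℚ K := IntermediateField.adjoin.finiteDimensional hint
  have hfinK : Module.finrank ℚ K ≤ 3 := by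
    rw [hK, IntermediateField.adjoin.finrank hint]
    exact hminlam
  have hlamK : lam ∈ K := IntermediateField.mem_adjoin_simple_self ℚ lam
  set lamK : K := ⟨lam, hlamK⟩ with hlamK'
  -- the matrix over K
  set MK : Matrix (Fin 3) (Fin 3) K :=
    A.map (algebraMap ℚ K) - Matrix.diagonal (fun _ => lamK) with hMK
  have hmapMK : MK.map (algebraMap K ℝ) = M := by
    ext i j
    by_cases h : i = j <;>
      simp [hMK, hM, h, Matrix.map_apply, Matrix.one_apply, Matrix.smul_apply, hlamK',
        IsScalarTower.algebraMap_apply ℚ K ℝ]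
  have hdetMK : MK.det = 0 := by
    have := RingHom.map_det (algebraMap K ℝ) MK
    rw [RingHom.mapMatrix_apply, hmapMK, hdet] at this
    apply (algebraMap K ℝ).injective
    simpa using this
  obtain ⟨v, hv0, hvK⟩ : ∃ v ≠ 0, MK.mulVec v = 0 :=
    Matrix.exists_mulVec_eq_zero_iff.mpr hdetMK
  set vR : Fin 3 → ℝ := fun i => algebraMap K ℝ (v i) with hvR
  have hvR0 : vR ≠ 0 := by
    intro h
    apply hv0
    funext i
    have := congrFun h i
    exact (algebraMap K ℝ).injective (by simpa [hvR] using this)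
  have hMvR : M.mulVec vR = 0 := by
    funext i
    have := RingHom.map_mulVec (algebraMap K ℝ) MK v i
    rw [hvK] at this
    simp only [Pi.zero_apply, map_zero] at this
    rw [← hmapMK]
    exact this.symm.trans rfl
  -- w is proportional to vR
  have hwW : w ∈ LinearMap.ker M.mulVecLin := by
    rw [LinearMap.mem_ker, Matrix.mulVecLin_apply]; exact hMw
  have hvW : vR ∈ LinearMap.ker M.mulVecLin := by
    rw [LinearMap.mem_ker, Matrix.mulVecLin_apply]; exact hMvR
  obtain ⟨g, hg0, hgall⟩ := finrank_eq_one_iff'.mp hdim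
  obtain ⟨a, ha⟩ := hgall ⟨w, hwW⟩
  obtain ⟨b, hb⟩ := hgall ⟨vR, hvW⟩
  have hbne : b ≠ 0 := by
    intro h
    apply hvR0
    have := congrArg Subtype.val hb
    simp only [h, zero_smul] at this
    exact this.symm
  set c : ℝ := a / b with hc
  have hwc : w = c • vR := by
    have h2 : c • (⟨vR, hvW⟩ : LinearMap.ker M.mulVecLin) = ⟨w, hwW⟩ := by
      rw [← hb, smul_smul, hc, div_mul_cancel₀ _ hbne, ha]
    have := congrArg Subtype.val h2
    simpa using this.symm
  -- recover ![1, α, β]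
  have hBunit : IsUnit B.det := (Matrix.isUnit_iff_isUnit_det B).mp hB
  have hBB : B * B⁻¹ = 1 := Matrix.mul_nonsing_inv B hBunit
  have h1 : (B.map ((↑) : ℚ → ℝ)) * (B⁻¹.map ((↑) : ℚ → ℝ)) = 1 := by
    ext i j
    have h2 := congrFun (congrFun hBB i) j
    simp only [Matrix.mul_apply, Matrix.map_apply, Matrix.one_apply] at h2 ⊢
    exact_mod_cast congrArg Rat.cast h2
  have hBw : (B.map ((↑) : ℚ → ℝ)).mulVec w = ![1, α, β] := by
    rw [hw, Matrix.mulVec_mulVec, h1, Matrix.one_mulVec]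
  set u : Fin 3 → K := (B.map (algebraMap ℚ K)).mulVec v with hu'
  have hmapB : (B.map (algebraMap ℚ K)).map (algebraMap K ℝ) = B.map ((↑) : ℚ → ℝ) := by
    ext i j
    simp [Matrix.map_apply, ← IsScalarTower.algebraMap_apply ℚ K ℝ]
  have hu : ∀ i, (B.map ((↑) : ℚ → ℝ)).mulVec vR i = algebraMap K ℝ (u i) := by
    intro i
    have h3 := RingHom.map_mulVec (algebraMap K ℝ) (B.map (algebraMap ℚ K)) v i
    rw [hmapB] at h3
    exact h3.symm
  have key : ∀ i, Matrix.vecCons (1 : ℝ) ![α, β] i = c * algebraMap K ℝ (u i) := by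
    intro i
    rw [← hBw, hwc, Matrix.mulVec_smul, Pi.smul_apply, smul_eq_mul, hu i]
  have key0 : (1 : ℝ) = c * algebraMap K ℝ (u 0) := by simpa using key 0
  have hu0 : u 0 ≠ 0 := by
    intro h
    rw [h, map_zero, mul_zero] at key0
    exact one_ne_zero key0
  have hcK : c = algebraMap K ℝ ((u 0)⁻¹) := by
    rw [map_inv₀]
    exact eq_inv_of_mul_eq_one_right (by linear_combination -key0)
  have hα : α = algebraMap K ℝ ((u 0)⁻¹ * u 1) := by
    rw [_root_.map_mul, ← hcK]
    simpa using key 1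
  have hβ : β = algebraMap K ℝ ((u 0)⁻¹ * u 2) := by
    rw [_root_.map_mul, ← hcK]
    simpa using key 2
  have hαK : α ∈ K := by rw [hα]; exact ((u 0)⁻¹ * u 1).2
  have hβK : β ∈ K := by rw [hβ]; exact ((u 0)⁻¹ * u 2).2
  -- conclusions
  have hsub : Algebra.adjoin ℚ ({α, β} : Set ℝ) ≤ K.toSubalgebra := by
    apply Algebra.adjoin_le
    intro x hx
    rcases hx with rfl | hx
    · exact hαK
    · rcases hx with rfl
      exact hβK
  have hrank : Module.rank ℚ (Algebra.adjoin ℚ ({α, β} : Set ℝ)) ≤ 3 := by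
    have hmono : Module.rank ℚ (Algebra.adjoin ℚ ({α, β} : Set ℝ)) ≤ Module.rank ℚ K :=
      Submodule.rank_mono (show Subalgebra.toSubmodule (Algebra.adjoin ℚ ({α, β} : Set ℝ)) ≤
        Subalgebra.toSubmodule K.toSubalgebra from OrderEmbedding.monotone _ hsub)
    refine hmono.trans ?_
    rw [← Module.finrank_eq_rank]
    exact_mod_cast hfinK
  have hαint : IsIntegral ℚ (⟨α, hαK⟩ : K) := IsIntegral.of_finite ℚ _
  have hβint : IsIntegral ℚ (⟨β, hβK⟩ : K) := IsIntegral.of_finite ℚ _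
  have hαmin : minpoly ℚ α = minpoly ℚ (⟨α, hαK⟩ : K) :=
    minpoly.algebraMap_eq (algebraMap K ℝ).injective ⟨α, hαK⟩
  have hβmin : minpoly ℚ β = minpoly ℚ (⟨β, hβK⟩ : K) :=
    minpoly.algebraMap_eq (algebraMap K ℝ).injective ⟨β, hβK⟩
  refine ⟨hrank, ?_, ?_, ?_, ?_⟩
  · exact ((hαint.map (IsScalarTower.toAlgHom ℚ K ℝ)).isAlgebraic)
  · rw [hαmin]
    exact (minpoly.natDegree_le _).trans hfinK
  · exact ((hβint.map (IsScalarTower.toAlgHom ℚ K ℝ)).isAlgebraic)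
  · rw [hβmin]
    exact (minpoly.natDegree_le _).trans hfinK
end

section
/- Let $A$ be a $3\times 3$ real matrix all of whose entries are positive and each of whose columns sums to $1$ (a column-stochastic matrix with positive entries). Then the powers $A^k$ converge as $k \to \infty$ to a matrix $P$ all of whose columns are equal; equivalently, there is a vector $\pi \in \mathbb{R}^3$ such that $A^k \to P$ where $P_{ij} = \pi_i$ for all $i,j$, i.e., each row of the limit $P$ is a scalar multiple of $(1,1,1)$. -/
open Filter Finset

noncomputable def mxF (x : Fin 3 → ℝ) : ℝ := univ.sup' univ_nonempty x
noncomputable def mnF (x : Fin 3 → ℝ) : ℝ := univ.inf' univ_nonempty x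

lemma mnF_le (x : Fin 3 → ℝ) (j : Fin 3) : mnF x ≤ x j := inf'_le _ (mem_univ j)
lemma le_mxF (x : Fin 3 → ℝ) (j : Fin 3) : x j ≤ mxF x := le_sup' _ (mem_univ j)
lemma mnF_le_mxF (x : Fin 3 → ℝ) : mnF x ≤ mxF x := (mnF_le x 0).trans (le_mxF x 0)

lemma comb_le (x w : Fin 3 → ℝ) (δ : ℝ) (hδ : 0 ≤ δ)
    (hw : ∀ l, δ ≤ w l) (hs : ∑ l, w l = 1) :
    ∑ l, x l * w l ≤ mxF x - δ * (mxF x - mnF x) := by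
  obtain ⟨l0, -, hl0⟩ := exists_mem_eq_inf' (univ_nonempty) x
  have h1 : (mxF x - x l0) * w l0 ≤ ∑ l, (mxF x - x l) * w l :=
    single_le_sum (f := fun l => (mxF x - x l) * w l)
      (fun l _ => mul_nonneg (sub_nonneg.2 (le_mxF x l)) (hδ.trans (hw l))) (mem_univ l0)
  have h2 : (mxF x - mnF x) * δ ≤ (mxF x - x l0) * w l0 := by
    rw [← hl0]
    exact mul_le_mul_of_nonneg_left (hw l0) (sub_nonneg.2 (mnF_le_mxF x))
  have h3 : ∑ l, (mxF x - x l) * w l = mxF x - ∑ l, x l * w l := by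
    simp [sub_mul, Finset.sum_sub_distrib, ← Finset.mul_sum, hs]
  nlinarith [h1, h2, h3]

lemma le_comb (x w : Fin 3 → ℝ) (δ : ℝ) (hδ : 0 ≤ δ)
    (hw : ∀ l, δ ≤ w l) (hs : ∑ l, w l = 1) :
    mnF x + δ * (mxF x - mnF x) ≤ ∑ l, x l * w l := by
  obtain ⟨l0, -, hl0⟩ := exists_mem_eq_sup' (univ_nonempty) x
  have h1 : (x l0 - mnF x) * w l0 ≤ ∑ l, (x l - mnF x) * w l :=
    single_le_sum (f := fun l => (x l - mnF x) * w l)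
      (fun l _ => mul_nonneg (sub_nonneg.2 (mnF_le x l)) (hδ.trans (hw l))) (mem_univ l0)
  have h2 : (mxF x - mnF x) * δ ≤ (x l0 - mnF x) * w l0 := by
    rw [← hl0]
    exact mul_le_mul_of_nonneg_left (hw l0) (sub_nonneg.2 (mnF_le_mxF x))
  have h3 : ∑ l, (x l - mnF x) * w l = (∑ l, x l * w l) - mnF x := by
    simp [sub_mul, Finset.sum_sub_distrib, ← Finset.mul_sum, hs]
  nlinarith [h1, h2, h3]

theorem stochastic_powers_converge (A : Matrix (Fin 3) (Fin 3) ℝ)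
    (hpos : ∀ i j, 0 < A i j)
    (hcol : ∀ j, ∑ i, A i j = 1) :
    ∃ π : Fin 3 → ℝ,
      Tendsto (fun k => A ^ k) atTop (nhds (Matrix.of fun i _ => π i)) := by
  set δ : ℝ := univ.inf' univ_nonempty (fun p : Fin 3 × Fin 3 => A p.1 p.2) with hδdef
  have hδpos : 0 < δ := by
    rw [hδdef, Finset.lt_inf'_iff]
    exact fun p _ => hpos p.1 p.2
  have hδle : ∀ l j, δ ≤ A l j := fun l j => inf'_le _ (mem_univ (l, j))
  set c : ℝ := 1 - 2 * δ with hcdef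
  have hc0 : 0 ≤ c := by
    have := hcol 0
    have h0 := hδle 0 0
    have h1 := hδle 1 0
    have h2 := (hpos 2 0).le
    rw [Fin.sum_univ_three] at this
    simp only [hcdef]; linarith
  have hc1 : c < 1 := by simp only [hcdef]; linarith
  -- row sequences
  set x : ℕ → Fin 3 → Fin 3 → ℝ := fun k i j => (A ^ k) i j with hxdef
  have hrec : ∀ k i j, x (k + 1) i j = ∑ l, x k i l * A l j := by
    intro k i j
    simp only [hxdef, pow_succ, Matrix.mul_apply]
  set osc : ℕ → Fin 3 → ℝ := fun k i => mxF (x k i) - mnF (x k i) with hoscdef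
  have hoscnn : ∀ k i, 0 ≤ osc k i := fun k i => sub_nonneg.2 (mnF_le_mxF _)
  have hmx_step : ∀ k i, mxF (x (k + 1) i) ≤ mxF (x k i) - δ * osc k i := by
    intro k i
    apply Finset.sup'_le
    intro j _
    rw [hrec k i j]
    exact comb_le (x k i) (fun l => A l j) δ hδpos.le (fun l => hδle l j) (hcol j)
  have hmn_step : ∀ k i, mnF (x k i) + δ * osc k i ≤ mnF (x (k + 1) i) := by
    intro k i
    apply Finset.le_inf'
    intro j _
    rw [hrec k i j]
    exact le_comb (x k i) (fun l => A l j) δ hδpos.le (fun l => hδle l j) (hcol j)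
  have hosc_step : ∀ k i, osc (k + 1) i ≤ c * osc k i := by
    intro k i
    have h1 := hmx_step k i
    have h2 := hmn_step k i
    simp only [hoscdef, hcdef] at *
    linarith
  have hosc_pow : ∀ i k, osc k i ≤ c ^ k * osc 0 i := by
    intro i k
    induction k with
    | zero => simp
    | succ n ih =>
      calc osc (n + 1) i ≤ c * osc n i := hosc_step n i
        _ ≤ c * (c ^ n * osc 0 i) := by
            exact mul_le_mul_of_nonneg_left ih hc0
        _ = c ^ (n + 1) * osc 0 i := by ring
  have hosc_tendsto : ∀ i, Tendsto (fun k => osc k i) atTop (nhds 0) := by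
    intro i
    have h1 : Tendsto (fun k => c ^ k * osc 0 i) atTop (nhds 0) := by
      simpa using (tendsto_pow_atTop_nhds_zero_of_lt_one hc0 hc1).mul_const (osc 0 i)
    exact tendsto_of_tendsto_of_tendsto_of_le_of_le tendsto_const_nhds h1
      (fun k => hoscnn k i) (fun k => hosc_pow i k)
  have hmn_mono : ∀ i, Monotone (fun k => mnF (x k i)) := by
    intro i
    apply monotone_nat_of_le_succ
    intro k
    have := hmn_step k i
    have h2 := mul_nonneg hδpos.le (hoscnn k i)
    linarith
  have hmx_anti : ∀ i, Antitone (fun k => mxF (x k i)) := by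
    intro i
    apply antitone_nat_of_succ_le
    intro k
    have := hmx_step k i
    have h2 := mul_nonneg hδpos.le (hoscnn k i)
    linarith
  have hbdd : ∀ i, BddAbove (Set.range fun k => mnF (x k i)) := by
    intro i
    refine ⟨mxF (x 0 i), ?_⟩
    rintro r ⟨k, rfl⟩
    exact (mnF_le_mxF _).trans (hmx_anti i (Nat.zero_le k))
  refine ⟨fun i => ⨆ k, mnF (x k i), ?_⟩
  apply tendsto_pi_nhds.2
  intro i
  apply tendsto_pi_nhds.2
  intro j
  have hmn_lim : Tendsto (fun k => mnF (x k i)) atTop (nhds (⨆ k, mnF (x k i))) :=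
    tendsto_atTop_ciSup (hmn_mono i) (hbdd i)
  have hub : Tendsto (fun k => mnF (x k i) + osc k i) atTop
      (nhds (⨆ k, mnF (x k i))) := by
    simpa using hmn_lim.add (hosc_tendsto i)
  have := tendsto_of_tendsto_of_tendsto_of_le_of_le hmn_lim hub
    (fun k => mnF_le (x k i) j)
    (fun k => by
      have := le_mxF (x k i) j
      simp only [hoscdef]
      linarith)
  simpa using this
end

section
/- For all real numbers $x, y, z > 0$ and all real $L \geq 1$: $$\frac{1}{xyz} - \frac{1}{x(Lx+y+Lz)z} - \frac{1}{xy(Lx+Ly+z)} - \frac{1}{(x+Ly+Lz)yz} \;\leq\; \frac{L-1}{L}\cdot\frac{1}{xyz}.$$ -/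
theorem area_TL_inequality (x y z L : ℝ) (hx : 0 < x) (hy : 0 < y) (hz : 0 < z)
    (hL : 1 ≤ L) :
    1 / (x * y * z) - 1 / (x * (L * x + y + L * z) * z)
      - 1 / (x * y * (L * x + L * y + z)) - 1 / ((x + L * y + L * z) * y * z)
      ≤ (L - 1) / L * (1 / (x * y * z)) := by
  have hL0 : 0 < L := lt_of_lt_of_le one_pos hL
  have hs : 0 < x + y + z := by linarith
  have h1 : 1 / (L * (x * (x + y + z) * z)) ≤ 1 / (x * (L * x + y + L * z) * z) := by
    apply one_div_le_one_div_of_le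
    · positivity
    · have : L * x + y + L * z ≤ L * (x + y + z) := by nlinarith
      nlinarith [mul_pos hx hz]
  have h2 : 1 / (L * (x * y * (x + y + z))) ≤ 1 / (x * y * (L * x + L * y + z)) := by
    apply one_div_le_one_div_of_le
    · positivity
    · have : L * x + L * y + z ≤ L * (x + y + z) := by nlinarith
      nlinarith [mul_pos hx hy]
  have h3 : 1 / (L * ((x + y + z) * y * z)) ≤ 1 / ((x + L * y + L * z) * y * z) := by
    apply one_div_le_one_div_of_le
    · positivity
    · have : x + L * y + L * z ≤ L * (x + y + z) := by nlinarith
      nlinarith [mul_pos hy hz]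
  have key : 1 / (L * (x * (x + y + z) * z)) + 1 / (L * (x * y * (x + y + z)))
      + 1 / (L * ((x + y + z) * y * z)) = 1 / L * (1 / (x * y * z)) := by
    field_simp
    ring
  have := add_le_add (add_le_add h1 h2) h3
  rw [key] at this
  have goal : 1 / L * (1 / (x * y * z)) ≤ 1 / (x * (L * x + y + L * z) * z)
      + 1 / (x * y * (L * x + L * y + z)) + 1 / ((x + L * y + L * z) * y * z) := this
  have : (L - 1) / L * (1 / (x * y * z)) = 1 / (x * y * z) - 1 / L * (1 / (x * y * z)) := by
    field_simp
  rw [this]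
  linarith
end

section
/- Let $a : \mathbb{N} \to \mathbb{N}$ be a sequence of positive integers (each $a_j \geq 1$), and set $s_n = a_1 + \cdots + a_n$. If $\limsup_{n \to \infty} \frac{s_n}{n} = \infty$, then $$\liminf_{n \to \infty} \frac{\prod_{j=1}^{n}(2a_j + 1)^3}{3^{s_n}} = 0.$$ -/
/-!
Since `(2a + 1)³ ≤ 64 · 2ᵃ`, the ratio is at most `64ⁿ (2/3)^{sₙ}`. Because `sₙ/n` is unbounded,
for every `k` there are infinitely many `n` with `sₙ ≥ k n`, and there the bound is
`(64 (2/3)ᵏ)ⁿ ≤ 2⁻ⁿ` once `k` is large.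
-/

open Filter Finset

lemma two_mul_add_one_pow_three_le (n : ℕ) : (2 * n + 1) ^ 3 ≤ 64 * 2 ^ n := by
  rcases lt_or_ge n 4 with hn | hn
  · interval_cases n <;> norm_num
  induction n, hn using Nat.le_induction with
  | base => norm_num
  | succ m hm ih =>
    have hstep : (2 * (m + 1) + 1) ^ 3 ≤ 2 * (2 * m + 1) ^ 3 := by
      obtain ⟨p, rfl⟩ := Nat.exists_eq_add_of_le hm
      ring_nf
      nlinarith [Nat.zero_le p]
    calc (2 * (m + 1) + 1) ^ 3 ≤ 2 * (2 * m + 1) ^ 3 := hstep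
      _ ≤ 2 * (64 * 2 ^ m) := Nat.mul_le_mul_left 2 ih
      _ = 64 * 2 ^ (m + 1) := by ring

lemma prod_two_mul_add_one_pow_three_le (a : ℕ → ℕ) (n : ℕ) :
    ∏ j ∈ range n, (2 * (a j : ℝ) + 1) ^ 3 ≤ 64 ^ n * 2 ^ (∑ j ∈ range n, a j) :=
  calc ∏ j ∈ range n, (2 * (a j : ℝ) + 1) ^ 3 ≤ ∏ j ∈ range n, (64 : ℝ) * 2 ^ a j :=
        prod_le_prod (fun j _ => by positivity)
          (fun j _ => by exact_mod_cast two_mul_add_one_pow_three_le (a j))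
    _ = 64 ^ n * 2 ^ (∑ j ∈ range n, a j) := by
        rw [prod_mul_distrib, prod_const, card_range, prod_pow_eq_pow_sum]

lemma frequently_mul_le_of_limsup_div_eq_top {s : ℕ → ℕ}
    (h : limsup (fun n : ℕ => (((s n : ℝ) / (n : ℝ) : ℝ) : EReal)) atTop = ⊤) (k : ℕ) :
    ∃ᶠ n in atTop, k * n ≤ s n := by
  have hk : ((k : ℝ) : EReal) < limsup (fun n : ℕ => (((s n : ℝ) / n : ℝ) : EReal)) atTop :=
    h ▸ EReal.coe_lt_top _
  refine ((frequently_lt_of_lt_limsup (by isBoundedDefault) hk).and_eventually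
    (eventually_gt_atTop 0)).mono fun n ⟨hlt, hn⟩ => ?_
  have hlt : (k : ℝ) < s n / n := EReal.coe_lt_coe_iff.mp hlt
  exact_mod_cast ((lt_div_iff₀ (by exact_mod_cast hn)).mp hlt).le

lemma frequently_pow_mul_pow_le {C r ε : ℝ} (hC : 0 ≤ C) (hr₀ : 0 ≤ r) (hr₁ : r < 1)
    (hε : 0 < ε) {s : ℕ → ℕ} (hs : ∀ k : ℕ, ∃ᶠ n in atTop, k * n ≤ s n) :
    ∃ᶠ n in atTop, C ^ n * r ^ s n ≤ ε := by
  obtain ⟨k, hk⟩ := exists_pow_lt_of_lt_one (by positivity : (0 : ℝ) < 1 / 2 / (C + 1)) hr₁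
  have hCk : C * r ^ k ≤ 1 / 2 := by
    rw [lt_div_iff₀ (by positivity)] at hk
    nlinarith [pow_nonneg hr₀ k]
  have hsmall : ∀ᶠ n in atTop, (1 / 2 : ℝ) ^ n ≤ ε :=
    (tendsto_pow_atTop_nhds_zero_of_lt_one (by norm_num) (by norm_num)).eventually_le_const hε
  refine ((hs k).and_eventually hsmall).mono fun n ⟨hkn, hn⟩ => ?_
  calc C ^ n * r ^ s n ≤ C ^ n * r ^ (k * n) :=
        mul_le_mul_of_nonneg_left (pow_le_pow_of_le_one hr₀ hr₁.le hkn) (by positivity)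
    _ = (C * r ^ k) ^ n := by rw [mul_pow, pow_mul]
    _ ≤ (1 / 2) ^ n := pow_le_pow_left₀ (by positivity) hCk n
    _ ≤ ε := hn

lemma liminf_eq_zero_of_frequently_le {α : Type*} {l : Filter α} {u : α → ℝ}
    (h₀ : ∀ᶠ x in l, 0 ≤ u x) (h : ∀ ε > 0, ∃ᶠ x in l, u x ≤ ε) : liminf u l = 0 := by
  have hbdd : l.IsBoundedUnder (· ≥ ·) u := isBoundedUnder_of_eventually_ge h₀
  refine le_antisymm (le_of_forall_gt_imp_ge_of_dense fun ε hε => ?_)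
    (le_liminf_of_le (IsCoboundedUnder.of_frequently_le (h 1 one_pos)) h₀)
  exact liminf_le_of_frequently_le (h ε hε) hbdd

theorem liminf_ratio_zero_general (a : ℕ → ℕ)
    (s : ℕ → ℕ) (hs : ∀ n, s n = ∑ j ∈ Finset.range n, a j)
    (hlimsup : limsup (fun n : ℕ => (((s n : ℝ) / (n : ℝ) : ℝ) : EReal)) atTop = ⊤) :
    liminf (fun n : ℕ =>
      (∏ j ∈ Finset.range n, (2 * (a j : ℝ) + 1) ^ 3) / 3 ^ (s n)) atTop = 0 := by
  have hratio : ∀ n, (∏ j ∈ range n, (2 * (a j : ℝ) + 1) ^ 3) / 3 ^ s n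
      ≤ 64 ^ n * (2 / 3) ^ s n := fun n => by
    rw [div_le_iff₀ (by positivity), div_pow, mul_assoc, div_mul_cancel₀ _ (by positivity), hs]
    exact prod_two_mul_add_one_pow_three_le a n
  refine liminf_eq_zero_of_frequently_le (Eventually.of_forall fun n => by positivity)
    fun ε hε => ?_
  exact (frequently_pow_mul_pow_le (by norm_num) (by norm_num) (by norm_num) hε
    (frequently_mul_le_of_limsup_div_eq_top hlimsup)).mono fun n hn => (hratio n).trans hn

theorem liminf_ratio_zero (a : ℕ → ℕ) (ha : ∀ j, 1 ≤ a j)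
    (s : ℕ → ℕ) (hs : ∀ n, s n = ∑ j ∈ Finset.range n, a j)
    (hlimsup : limsup (fun n : ℕ => (((s n : ℝ) / (n : ℝ) : ℝ) : EReal)) atTop = ⊤) :
    liminf (fun n : ℕ =>
      (∏ j ∈ Finset.range n, (2 * (a j : ℝ) + 1) ^ 3) / 3 ^ (s n)) atTop = 0 :=
  liminf_ratio_zero_general a s hs hlimsup
end
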